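/- arXiv:1306.5465 — 2 statements merged into one kernel-verified Lean document; each statement's English description precedes it below -/
import Mathlib

section
/- Let G be a finite, connected graph and let w ∈ Λ be an equilibrium. Set P = {i ∈ [m] : w_i > 0} and Z = {i ∈ [m] : w_i = 0}. Then w is non-unstable (i.e., no eigenvalue of JF(w) has strictly positive real part) if and only if (∂L/∂v_i)(w) ≤ 0 for every i ∈ Z and (∂L/∂v_i)(w) = 0 for every i ∈ P. -/
open MeasureTheory Filter Finset Topology

noncomputable section

namespace GPU

variable {m : ℕ}

/-- The vector field `F` of the ODE associated to the generalized Pólya urn,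
`F_i(x) = -x_i + (1/N) ∑_{j ~ i} x_i/(x_i+x_j)` where `N` is the number of edges. -/
def polyaF (G : SimpleGraph (Fin m)) [DecidableRel G.Adj] (x : Fin m → ℝ) : Fin m → ℝ :=
  fun i => -x i + (1 / (G.edgeFinset.card : ℝ)) * ∑ j ∈ G.neighborFinset i, x i / (x i + x j)

/-- The domain `Δ`. -/
def simplexDelta (G : SimpleGraph (Fin m)) (c : ℝ) : Set (Fin m → ℝ) :=
  {x | (∀ i, 0 ≤ x i) ∧ ∑ i, x i = 1 ∧ ∀ i j, G.Adj i j → c ≤ x i + x j}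

/-- The equilibria set `Λ = {x ∈ Δ : F(x) = 0}`. -/
def equilibria (G : SimpleGraph (Fin m)) [DecidableRel G.Adj] (c : ℝ) : Set (Fin m → ℝ) :=
  {x | x ∈ simplexDelta G c ∧ polyaF G x = 0}

/-- The Lyapunov function `L(v) = -∑ v_i + (1/N) ∑_{{i,j} ∈ E} log (v_i + v_j)`. -/
def polyaL (G : SimpleGraph (Fin m)) [DecidableRel G.Adj] (v : Fin m → ℝ) : ℝ :=
  -∑ i, v i + (1 / (G.edgeFinset.card : ℝ)) *
    ∑ e ∈ G.edgeFinset,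
      Sym2.lift ⟨fun i j => Real.log (v i + v j), fun i j => by simp [add_comm]⟩ e

/-- The partial derivative `∂L/∂v_i = -1 + (1/N) ∑_{j ~ i} 1/(v_i+v_j)`. -/
def partialL (G : SimpleGraph (Fin m)) [DecidableRel G.Adj] (v : Fin m → ℝ) (i : Fin m) : ℝ :=
  -1 + (1 / (G.edgeFinset.card : ℝ)) * ∑ j ∈ G.neighborFinset i, 1 / (v i + v j)

/-- The Jacobian matrix `JF(v)` of `F` at `v`. -/
def polyaJacobian (G : SimpleGraph (Fin m)) [DecidableRel G.Adj] (v : Fin m → ℝ) :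
    Matrix (Fin m) (Fin m) ℝ :=
  Matrix.of fun i j => fderiv ℝ (fun x => polyaF G x i) v (Pi.single j 1)

/-- A point is unstable if its Jacobian matrix has an eigenvalue with strictly
positive real part. -/
def Unstable (G : SimpleGraph (Fin m)) [DecidableRel G.Adj] (v : Fin m → ℝ) : Prop :=
  ∃ z : ℂ, z ∈ spectrum ℂ ((polyaJacobian G v).map Complex.ofReal) ∧ 0 < z.re

/-- `G` is balanced-bipartite if it admits a bipartition `V = A ∪ Aᶜ` with `#A = #Aᶜ`. -/
def BalancedBipartite (G : SimpleGraph (Fin m)) : Prop :=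
  ∃ A : Finset (Fin m), (∀ i j, G.Adj i j → (i ∈ A ↔ j ∉ A)) ∧ A.card = Aᶜ.card

/-- The generalized Pólya urn process on `G`: at each step, for each edge `{i,j}` one
ball is added either to bin `i` or to bin `j`; conditionally on the past the ball goes
to `i` with probability `B_i(n)/(B_i(n)+B_j(n))` and the choices for distinct edges are
conditionally independent (encoded by the product form of `condLaw`). -/
structure PolyaUrn (G : SimpleGraph (Fin m)) [DecidableRel G.Adj]
    (Ω : Type) [mΩ : MeasurableSpace Ω] (μ : Measure Ω) where
  /-- initial number of balls in each bin -/
  B₀ : Fin m → ℕ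
  B₀_pos : ∀ i, 1 ≤ B₀ i
  /-- the filtration of the process -/
  ℱ : Filtration ℕ mΩ
  /-- `δ (n+1) i j` is the indicator that the ball added on edge `{i,j}` at step `n+1`
  goes to bin `i` -/
  δ : ℕ → Fin m → Fin m → Ω → ℕ
  /-- number of balls in each bin after step `n` -/
  B : ℕ → Ω → Fin m → ℕ
  B_init : ∀ ω i, B 0 ω i = B₀ i
  B_step : ∀ n ω i, B (n + 1) ω i = B n ω i + ∑ j ∈ G.neighborFinset i, δ (n + 1) i j ω
  δ_sum : ∀ n i j ω, G.Adj i j → δ (n + 1) i j ω + δ (n + 1) j i ω = 1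
  B_meas : ∀ n i, Measurable[ℱ n] fun ω => B n ω i
  δ_meas : ∀ n i j, Measurable[ℱ (n + 1)] fun ω => δ (n + 1) i j ω
  condLaw : ∀ n (s : Fin m → Fin m → ℕ),
    (μ[Set.indicator {ω | ∀ i j, G.Adj i j → i < j → δ (n + 1) i j ω = s i j}
        (fun _ => (1 : ℝ)) | ℱ n])
      =ᵐ[μ] fun ω => ∏ i, ∏ j ∈ (G.neighborFinset i).filter (fun j => i < j),
        (if s i j = 1 then (B n ω i : ℝ) / ((B n ω i : ℝ) + (B n ω j : ℝ))
         else if s i j = 0 then (B n ω j : ℝ) / ((B n ω i : ℝ) + (B n ω j : ℝ)) else 0)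

/-- The proportion of balls in each bin, `x_i(n) = B_i(n)/(N₀ + nN)`. -/
def PolyaUrn.x {G : SimpleGraph (Fin m)} [DecidableRel G.Adj] {Ω : Type}
    [mΩ : MeasurableSpace Ω] {μ : Measure Ω} (U : PolyaUrn G Ω μ) (n : ℕ) (ω : Ω) :
    Fin m → ℝ :=
  fun i => (U.B n ω i : ℝ) / ((∑ j, U.B₀ j + n * G.edgeFinset.card : ℕ) : ℝ)

end GPU

/-!
Since `F_i(x) = x_i · ∂L/∂v_i(x)`, row `i` of `JF(w)` is `∂L/∂v_i(w) e_i + w_i ∇(∂L/∂v_i)(w)`.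
If `w_i = 0` this row is `∂L/∂v_i(w) e_i`, so `∂L/∂v_i(w)` is an eigenvalue; if `w_i > 0` the
equilibrium equation forces `∂L/∂v_i(w) = 0`. Conversely, the off-diagonal entries of row `i`
are `-w_i / (N (w_i + w_j)²)` for `j ~ i`, and their absolute values add up to exactly
`∂L/∂v_i(w) - J_ii`. So the `i`-th Gershgorin disc reaches at most `∂L/∂v_i(w)` to the right,
and the sign conditions put every eigenvalue in the closed left half-plane.
-/

namespace Matrix

variable {n : Type*} [Fintype n] [DecidableEq n]

theorem diag_mem_spectrum_of_offDiag_row_eq_zero {K : Type*} [Field K] (A : Matrix n n K) (i : n)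
    (h : ∀ j, j ≠ i → A i j = 0) : A i i ∈ spectrum K A := by
  rw [spectrum.mem_iff, isUnit_iff_isUnit_det, det_eq_zero_of_row_eq_zero i fun j => ?_]
  · exact not_isUnit_zero
  rcases eq_or_ne j i with rfl | hj
  · simp [algebraMap_matrix_apply]
  · simp [algebraMap_matrix_apply, hj.symm, h j hj]

theorem exists_re_le_of_mem_spectrum_map_ofReal (A : Matrix n n ℝ) {z : ℂ}
    (hz : z ∈ spectrum ℂ (A.map Complex.ofReal)) :
    ∃ k, z.re ≤ A k k + ∑ j ∈ Finset.univ.erase k, |A k j| := by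
  rw [← spectrum_toLin', ← Module.End.hasEigenvalue_iff_mem_spectrum] at hz
  obtain ⟨k, hk⟩ := eigenvalue_mem_ball hz
  refine ⟨k, ?_⟩
  rw [Metric.mem_closedBall, dist_eq_norm] at hk
  have hre := Complex.re_le_norm (z - (A k k : ℂ))
  simp only [map_apply, Complex.norm_real, Real.norm_eq_abs, Complex.sub_re,
    Complex.ofReal_re] at hk hre
  linarith

end Matrix

section

open ContinuousLinearMap

theorem hasFDerivAt_div_add {ι : Type*} [Fintype ι] {w : ι → ℝ} (i j : ι)
    (h : w i + w j ≠ 0) :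
    HasFDerivAt (fun x : ι → ℝ => x i / (x i + x j))
      ((w i + w j)⁻¹ • proj (R := ℝ) (φ := fun _ : ι => ℝ) i
        - (w i / (w i + w j) ^ 2) • (proj i + proj (R := ℝ) (φ := fun _ : ι => ℝ) j)) w := by
  have hs := (hasFDerivAt_apply (𝕜 := ℝ) i w).add (hasFDerivAt_apply (𝕜 := ℝ) j w)
  have := (hasFDerivAt_apply (𝕜 := ℝ) i w).mul ((hasDerivAt_inv h).comp_hasFDerivAt w hs)
  refine (this.congr_fderiv ?_).congr_of_eventuallyEq (.of_forall fun x => ?_)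
  · ext v
    simp only [smul_add, neg_smul, smul_neg, Function.comp_apply, Pi.add_apply, add_apply,
      neg_apply, smul_apply, proj_apply, smul_eq_mul, sub_apply]
    field_simp
    ring
  · simp [div_eq_mul_inv]

end

namespace GPU

section Jacobian

open ContinuousLinearMap

variable {m : ℕ} {G : SimpleGraph (Fin m)} [DecidableRel G.Adj] {w : Fin m → ℝ}

theorem polyaF_eq_mul_partialL (i : Fin m) :
    polyaF G w i = w i * partialL G w i := by
  have h : ∑ j ∈ G.neighborFinset i, w i / (w i + w j)
      = w i * ∑ j ∈ G.neighborFinset i, 1 / (w i + w j) := by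
    simp_rw [Finset.mul_sum, mul_one_div]
  rw [polyaF, partialL, h]
  ring

theorem partialL_eq_zero_of_polyaF_eq_zero (hF : polyaF G w = 0) {i : Fin m} (hi : 0 < w i) :
    partialL G w i = 0 := by
  have h := congrFun hF i
  rw [polyaF_eq_mul_partialL, Pi.zero_apply] at h
  exact (mul_eq_zero.mp h).resolve_left hi.ne'

theorem hasFDerivAt_polyaF_apply (i : Fin m) (hadj : ∀ j, G.Adj i j → w i + w j ≠ 0) :
    HasFDerivAt (fun x => polyaF G x i)
      (-proj i + (1 / (G.edgeFinset.card : ℝ)) • ∑ j ∈ G.neighborFinset i,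
        ((w i + w j)⁻¹ • proj (R := ℝ) (φ := fun _ : Fin m => ℝ) i
          - (w i / (w i + w j) ^ 2) • (proj i + proj (R := ℝ) (φ := fun _ : Fin m => ℝ) j))) w :=
  (hasFDerivAt_apply i w).neg.add <| (HasFDerivAt.fun_sum fun j hj =>
    hasFDerivAt_div_add i j (hadj j ((G.mem_neighborFinset i j).mp hj))).const_mul _

theorem fderiv_polyaF_apply (i : Fin m) (hadj : ∀ j, G.Adj i j → w i + w j ≠ 0)
    (v : Fin m → ℝ) :
    fderiv ℝ (fun x => polyaF G x i) w v = v i * partialL G w i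
      - w i / G.edgeFinset.card * ∑ j ∈ G.neighborFinset i, (v i + v j) / (w i + w j) ^ 2 := by
  rw [(hasFDerivAt_polyaF_apply i hadj).fderiv]
  simp only [partialL, add_apply, neg_apply, smul_apply, _root_.sum_apply, sub_apply,
    proj_apply, smul_eq_mul, Finset.mul_sum]
  rw [mul_add, Finset.mul_sum, add_sub_assoc, ← Finset.sum_sub_distrib]
  congr 1
  · ring
  · refine Finset.sum_congr rfl fun j _ => ?_
    ring

theorem polyaJacobian_apply_self (i : Fin m) (hadj : ∀ j, G.Adj i j → w i + w j ≠ 0) :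
    polyaJacobian G w i i = partialL G w i
      - w i / G.edgeFinset.card * ∑ j ∈ G.neighborFinset i, 1 / (w i + w j) ^ 2 := by
  rw [polyaJacobian, Matrix.of_apply, fderiv_polyaF_apply i hadj]
  refine congrArg₂ _ (by simp) (congrArg _ (Finset.sum_congr rfl fun j hj => ?_))
  have hji : j ≠ i := (G.ne_of_adj ((G.mem_neighborFinset i j).mp hj)).symm
  simp [hji]

theorem polyaJacobian_apply_of_ne {i k : Fin m} (hki : k ≠ i)
    (hadj : ∀ j, G.Adj i j → w i + w j ≠ 0) :
    polyaJacobian G w i k =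
      -if k ∈ G.neighborFinset i then w i / G.edgeFinset.card / (w i + w k) ^ 2 else 0 := by
  rw [polyaJacobian, Matrix.of_apply, fderiv_polyaF_apply i hadj]
  simp only [Pi.single_apply, if_neg hki.symm, zero_mul, zero_sub, zero_add]
  simp_rw [ite_div, zero_div, Finset.sum_ite_eq']
  split_ifs <;> ring

theorem polyaJacobian_apply_self_add_sum_abs {i : Fin m} (hwi : 0 ≤ w i)
    (hadj : ∀ j, G.Adj i j → w i + w j ≠ 0) :
    polyaJacobian G w i i + ∑ k ∈ Finset.univ.erase i, |polyaJacobian G w i k| =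
      partialL G w i := by
  have hoff : ∀ k ∈ Finset.univ.erase i, |polyaJacobian G w i k| =
      if k ∈ G.neighborFinset i then w i / G.edgeFinset.card / (w i + w k) ^ 2 else 0 := by
    intro k hk
    rw [polyaJacobian_apply_of_ne (Finset.ne_of_mem_erase hk) hadj, abs_neg]
    split_ifs
    · exact abs_of_nonneg (by positivity)
    · exact abs_zero
  have hsub : G.neighborFinset i ⊆ Finset.univ.erase i := fun j hj =>
    Finset.mem_erase.mpr ⟨(G.ne_of_adj ((G.mem_neighborFinset i j).mp hj)).symm, Finset.mem_univ j⟩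
  rw [Finset.sum_congr rfl hoff, Finset.sum_ite_mem, Finset.inter_eq_right.mpr hsub,
    polyaJacobian_apply_self i hadj, Finset.mul_sum]
  simp_rw [mul_one_div]
  ring

theorem polyaJacobian_apply_of_eq_zero {i : Fin m} (hwi : w i = 0)
    (hadj : ∀ j, G.Adj i j → w i + w j ≠ 0) (k : Fin m) :
    polyaJacobian G w i k = if k = i then partialL G w i else 0 := by
  split_ifs with hki
  · rw [hki, polyaJacobian_apply_self i hadj, hwi]
    ring
  · rw [polyaJacobian_apply_of_ne hki hadj, hwi]
    simp

end Jacobian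

theorem non_unstable_iff_partialL_conditions_general
    (m : ℕ) (G : SimpleGraph (Fin m)) [DecidableRel G.Adj]
    (c : ℝ) (hc0 : 0 < c)
    (w : Fin m → ℝ) (hw : w ∈ equilibria G c) :
    ¬ Unstable G w ↔
      ((∀ i : Fin m, w i = 0 → partialL G w i ≤ 0) ∧
       (∀ i : Fin m, 0 < w i → partialL G w i = 0)) := by
  obtain ⟨⟨hw0, -, hwc⟩, hF⟩ := hw
  have hne : ∀ i j, G.Adj i j → w i + w j ≠ 0 := fun i j h => (hc0.trans_le (hwc i j h)).ne'
  have hP : ∀ i, 0 < w i → partialL G w i = 0 := fun i => partialL_eq_zero_of_polyaF_eq_zero hF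
  refine ⟨fun hns => ⟨fun i hi => ?_, hP⟩, fun ⟨hZ, _⟩ ⟨z, hz, hre⟩ => ?_⟩
  · by_contra! hpos
    have hrow := polyaJacobian_apply_of_eq_zero hi (hne i)
    refine hns ⟨partialL G w i, ?_, by simpa using hpos⟩
    simpa [hrow] using Matrix.diag_mem_spectrum_of_offDiag_row_eq_zero
      ((polyaJacobian G w).map Complex.ofReal) i fun k hk => by simp [hrow, hk]
  · obtain ⟨k, hk⟩ := Matrix.exists_re_le_of_mem_spectrum_map_ofReal _ hz
    rw [polyaJacobian_apply_self_add_sum_abs (hw0 k) (hne k)] at hk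
    rcases (hw0 k).eq_or_lt with h | h
    · linarith [hZ k h.symm]
    · linarith [hP k h]

/-- An equilibrium `w ∈ Λ` is non-unstable (no Jacobian eigenvalue
with strictly positive real part) if and only if `∂L/∂v_i(w) ≤ 0` for every `i` in
`Z = {i : w_i = 0}` and `∂L/∂v_i(w) = 0` for every `i` in `P = {i : w_i > 0}`. -/
theorem non_unstable_iff_partialL_conditions
    (m : ℕ) (G : SimpleGraph (Fin m)) [DecidableRel G.Adj] (hconn : G.Connected)
    (c : ℝ) (hc0 : 0 < c) (hc1 : c < 1 / (G.edgeFinset.card : ℝ))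
    (w : Fin m → ℝ) (hw : w ∈ equilibria G c) :
    ¬ Unstable G w ↔
      ((∀ i : Fin m, w i = 0 → partialL G w i ≤ 0) ∧
       (∀ i : Fin m, 0 < w i → partialL G w i = 0)) :=
  non_unstable_iff_partialL_conditions_general m G c hc0 w hw

end GPU
end
end

section
/- Let G be a finite, connected graph that is not balanced-bipartite, and let w ∈ Λ be a non-unstable equilibrium. Define f(v_1,…,v_m) = Σ_{{i,j}∈E} (w_i+w_j)/(v_i+v_j). Then f(v) ≥ N for all v ∈ Δ, with equality if and only if v = w. -/
open MeasureTheory Filter Finset Topology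

noncomputable section

namespace GPU

/-- `f(v) = ∑_{{i,j} ∈ E} (w_i + w_j)/(v_i + v_j)`. -/
def edgeRatioSum (G : SimpleGraph (Fin m)) [DecidableRel G.Adj]
    (w v : Fin m → ℝ) : ℝ :=
  ∑ e ∈ G.edgeFinset,
    Sym2.lift ⟨fun i j => (w i + w j) / (v i + v j), fun i j => by simp [add_comm]⟩ e

end GPU

/-! With `g(v) = ∑_{{i,j} ∈ E} (v_i + v_j)/(w_i + w_j)`, AM–GM on each edge gives
`f(v) + g(v) ≥ 2N`, with equality only if `v_i + v_j = w_i + w_j` on every edge.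
Since `g(v) = ∑_i v_i ∑_{j ~ i} 1/(w_i + w_j) = N ∑_i v_i (1 + ∂_iL(w))`, it suffices that
`∂_iL(w) ≤ 0` for every `i`. Where `w_i ≠ 0` this is the equilibrium equation, because
`F_i = x_i ∂_iL`. Where `w_i = 0` the `i`-th row of `JF(w)` is `∂_iL(w) e_i`, so `∂_iL(w)` is
an eigenvalue, which is `≤ 0` as `w` is not unstable. Hence `g(v) ≤ N ≤ f(v)`.

In the equality case `u = v - w` has `u_i + u_j = 0` on every edge and `∑ u_i = 0`; on a
connected graph `u` then takes the values `±a` alternately, and `a ≠ 0` would give a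
balanced bipartition. -/

namespace SimpleGraph

variable {V : Type*} {G : SimpleGraph V}

theorem Walk.apply_eq_neg_one_pow_length_mul {R : Type*} [Ring R] {u : V → R}
    (hu : ∀ i j, G.Adj i j → u j = -u i) {x y : V} (p : G.Walk x y) :
    u y = (-1) ^ p.length * u x := by
  induction p with
  | nil => simp
  | cons h p ih => rw [ih, hu _ _ h, length_cons, pow_succ, mul_assoc, neg_one_mul]

variable [Fintype V] (G) [DecidableRel G.Adj] {M : Type*} [AddCommMonoid M]

theorem sum_darts_eq_sum_sum_neighborFinset (h : V → V → M) :
    ∑ d : G.Dart, h d.fst d.snd = ∑ v, ∑ w ∈ G.neighborFinset v, h v w := by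
  let e : (Σ v, G.neighborSet v) ≃ G.Dart :=
    { toFun s := ⟨(s.1, s.2), s.2.2⟩, invFun d := ⟨d.fst, d.snd, d.adj⟩ }
  rw [← e.sum_comp, Fintype.sum_sigma]
  refine sum_congr rfl fun v _ => ?_
  rw [neighborFinset, ← sum_set_coe]
  rfl

theorem sum_darts_symm (h : G.Dart → M) : ∑ d : G.Dart, h d.symm = ∑ d : G.Dart, h d :=
  Equiv.sum_comp (Dart.symm_involutive.toPerm _) h

theorem sum_darts_edge (F : Sym2 V → M) :
    ∑ d : G.Dart, F d.edge = 2 • ∑ e ∈ G.edgeFinset, F e := by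
  classical
  rw [← sum_fiberwise_of_maps_to (g := Dart.edge) (t := G.edgeFinset) (by simp), smul_sum]
  refine sum_congr rfl fun e he => ?_
  rw [sum_congr rfl fun d hd => congrArg F (mem_filter.1 hd).2, sum_const,
    G.dart_edge_fiber_card e (mem_edgeFinset.1 he)]

end SimpleGraph

theorem Matrix.mem_spectrum_of_row_eq_single {K n : Type*} [Field K] [Fintype n]
    [DecidableEq n] {M : Matrix n n K} {i : n} {a : K} (h : M i = Pi.single i a) :
    a ∈ spectrum K M := by
  rw [spectrum.mem_iff, Matrix.isUnit_iff_isUnit_det,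
    Matrix.det_eq_zero_of_row_eq_zero i fun j => ?_]
  · exact not_isUnit_zero
  · rw [Matrix.sub_apply, h, Matrix.algebraMap_matrix_apply, Pi.single_apply]
    rcases eq_or_ne i j with rfl | hij
    · simp
    · simp [hij, hij.symm]

lemma two_le_div_add_div {x y : ℝ} (hx : 0 < x) (hy : 0 < y) : 2 ≤ x / y + y / x := by
  rw [div_add_div _ _ hy.ne' hx.ne', le_div_iff₀ (by positivity)]
  nlinarith [sq_nonneg (x - y)]

lemma eq_of_div_add_div_eq_two {x y : ℝ} (hx : 0 < x) (hy : 0 < y)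
    (h : x / y + y / x = 2) : x = y := by
  rw [div_add_div _ _ hy.ne' hx.ne', div_eq_iff (by positivity)] at h
  nlinarith [sq_nonneg (x - y)]

namespace GPU

variable {m : ℕ} {G : SimpleGraph (Fin m)}

lemma add_pos_of_mem_simplexDelta {c : ℝ} {x : Fin m → ℝ} (hx : x ∈ simplexDelta G c)
    (hc : 0 < c) {i j : Fin m} (h : G.Adj i j) : 0 < x i + x j :=
  hc.trans_le (hx.2.2 i j h)

lemma eq_zero_of_forall_adj_add_eq_zero {R : Type*} [Field R] [CharZero R]
    (hconn : G.Connected) (hG : ¬ BalancedBipartite G) {u : Fin m → R}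
    (hu : ∀ i j, G.Adj i j → u i + u j = 0) (hsum : ∑ i, u i = 0) : u = 0 := by
  classical
  obtain ⟨i₀⟩ := hconn.nonempty
  have hflip : ∀ i j, G.Adj i j → u j = -u i := fun i j h =>
    eq_neg_of_add_eq_zero_right (hu i j h)
  have hpm : ∀ i, u i = u i₀ ∨ u i = -u i₀ := fun i => by
    rw [(hconn.preconnected i₀ i).some.apply_eq_neg_one_pow_length_mul hflip]
    rcases neg_one_pow_eq_or R (hconn.preconnected i₀ i).some.length with h | h <;> simp [h]
  by_contra hne
  have ha : u i₀ ≠ 0 := fun h0 => hne <| funext fun i => by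
    rcases hpm i with h | h <;> simp [h, h0]
  apply hG
  set A : Finset (Fin m) := {i | u i = u i₀}
  refine ⟨A, fun i j hij => ?_, ?_⟩
  · simp only [A, mem_filter, mem_univ, true_and, hflip i j hij]
    rcases hpm i with h | h <;> simp [h, neg_eq_self, ha]
  · have hA : ∑ i ∈ A, u i = #A • u i₀ := sum_eq_card_nsmul fun i hi => (mem_filter.1 hi).2
    have hAc : ∑ i ∈ Aᶜ, u i = #Aᶜ • -u i₀ := sum_eq_card_nsmul fun i hi =>
      (hpm i).resolve_left (by simpa [A] using hi)
    rw [← sum_add_sum_compl A, hA, hAc, nsmul_eq_mul, nsmul_eq_mul, mul_neg, ← sub_eq_add_neg,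
      ← sub_mul, mul_eq_zero, sub_eq_zero, Nat.cast_inj] at hsum
    exact hsum.resolve_right ha

variable [DecidableRel G.Adj]

lemma two_mul_edgeRatioSum (w v : Fin m → ℝ) :
    2 * edgeRatioSum G w v = ∑ d : G.Dart, (w d.fst + w d.snd) / (v d.fst + v d.snd) := by
  have h := G.sum_darts_edge
    (Sym2.lift ⟨fun i j => (w i + w j) / (v i + v j), fun i j => by simp [add_comm]⟩)
  rw [nsmul_eq_mul, Nat.cast_ofNat] at h
  exact h.symm

lemma edgeRatioSum_eq_sum_mul_sum (a b : Fin m → ℝ) :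
    edgeRatioSum G a b = ∑ i, a i * ∑ j ∈ G.neighborFinset i, 1 / (b i + b j) := by
  have hsymm : ∑ d : G.Dart, a d.snd / (b d.fst + b d.snd) =
      ∑ d : G.Dart, a d.fst / (b d.fst + b d.snd) := by
    rw [← G.sum_darts_symm]
    simp [add_comm]
  have h := two_mul_edgeRatioSum (G := G) a b
  simp_rw [add_div, sum_add_distrib, hsymm] at h
  simp_rw [mul_sum, mul_one_div]
  rw [← G.sum_darts_eq_sum_sum_neighborFinset fun i j => a i / (b i + b j)]
  linarith

lemma edgeRatioSum_self {w : Fin m → ℝ} (hw : ∀ i j, G.Adj i j → 0 < w i + w j) :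
    edgeRatioSum G w w = #G.edgeFinset := by
  have h := two_mul_edgeRatioSum (G := G) w w
  rw [sum_congr rfl fun d _ => div_self (hw _ _ d.adj).ne', sum_const, card_univ,
    G.dart_card_eq_twice_card_edges, nsmul_eq_mul, mul_one] at h
  push_cast at h
  linarith

lemma two_mul_edgeRatioSum_add (w v : Fin m → ℝ) :
    2 * (edgeRatioSum G w v + edgeRatioSum G v w) =
      ∑ d : G.Dart, ((w d.fst + w d.snd) / (v d.fst + v d.snd) +
        (v d.fst + v d.snd) / (w d.fst + w d.snd)) := by
  rw [mul_add, two_mul_edgeRatioSum, two_mul_edgeRatioSum, sum_add_distrib]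

lemma four_mul_card_edges_eq_sum_darts :
    4 * (#G.edgeFinset : ℝ) = ∑ _d : G.Dart, 2 := by
  rw [sum_const, card_univ, G.dart_card_eq_twice_card_edges, nsmul_eq_mul]
  push_cast
  ring

lemma two_mul_card_edges_le_edgeRatioSum_add {w v : Fin m → ℝ}
    (hw : ∀ i j, G.Adj i j → 0 < w i + w j) (hv : ∀ i j, G.Adj i j → 0 < v i + v j) :
    2 * #G.edgeFinset ≤ edgeRatioSum G w v + edgeRatioSum G v w := by
  have h := sum_le_sum (s := univ) fun (d : G.Dart) _ =>
    two_le_div_add_div (hw _ _ d.adj) (hv _ _ d.adj)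
  rw [← two_mul_edgeRatioSum_add, ← four_mul_card_edges_eq_sum_darts] at h
  linarith

lemma add_eq_add_of_edgeRatioSum_add_eq {w v : Fin m → ℝ}
    (hw : ∀ i j, G.Adj i j → 0 < w i + w j) (hv : ∀ i j, G.Adj i j → 0 < v i + v j)
    (h : edgeRatioSum G w v + edgeRatioSum G v w = 2 * #G.edgeFinset) :
    ∀ ⦃i j⦄, G.Adj i j → v i + v j = w i + w j := by
  intro i j hij
  have hsum : ∑ _d : G.Dart, (2 : ℝ) =
      ∑ d : G.Dart, ((w d.fst + w d.snd) / (v d.fst + v d.snd) +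
        (v d.fst + v d.snd) / (w d.fst + w d.snd)) := by
    rw [← two_mul_edgeRatioSum_add, ← four_mul_card_edges_eq_sum_darts, h]
    ring
  have hle := fun (d : G.Dart) (_ : d ∈ univ) =>
    two_le_div_add_div (hw _ _ d.adj) (hv _ _ d.adj)
  have hij2 := (sum_eq_sum_iff_of_le hle).1 hsum ⟨(i, j), hij⟩ (mem_univ _)
  exact (eq_of_div_add_div_eq_two (hw i j hij) (hv i j hij) hij2.symm).symm

lemma polyaF_apply_eq_mul_partialL (x : Fin m → ℝ) (i : Fin m) :
    polyaF G x i = x i * partialL G x i := by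
  simp only [polyaF, partialL, mul_add, mul_neg_one, mul_sum]
  exact congrArg _ (sum_congr rfl fun j _ => by ring)

lemma hasFDerivAt_polyaF_of_eq_zero {w : Fin m → ℝ} {i : Fin m} (hwi : w i = 0)
    (hw : ∀ j ∈ G.neighborFinset i, w i + w j ≠ 0) :
    HasFDerivAt (fun x => polyaF G x i) (partialL G w i • ContinuousLinearMap.proj (R := ℝ) i)
      w := by
  have hL : DifferentiableAt ℝ (fun x => partialL G x i) w := by
    refine (differentiableAt_const _).add (DifferentiableAt.const_mul ?_ _)
    exact DifferentiableAt.fun_sum fun j hj => by fun_prop (disch := exact hw j hj)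
  simp_rw [polyaF_apply_eq_mul_partialL]
  have h := (hasFDerivAt_apply i w).fun_mul hL.hasFDerivAt
  rwa [hwi, zero_smul, zero_add] at h

lemma polyaJacobian_row_eq_single_of_eq_zero {w : Fin m → ℝ} {i : Fin m} (hwi : w i = 0)
    (hw : ∀ j ∈ G.neighborFinset i, w i + w j ≠ 0) :
    polyaJacobian G w i = Pi.single i (partialL G w i) := by
  ext j
  rw [polyaJacobian, Matrix.of_apply, (hasFDerivAt_polyaF_of_eq_zero hwi hw).fderiv]
  rcases eq_or_ne j i with rfl | hji
  · simp
  · simp [hji, hji.symm]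

lemma partialL_nonpos_of_not_unstable {w : Fin m → ℝ} (hwu : ¬ Unstable G w) {i : Fin m}
    (hwi : w i = 0) (hw : ∀ j ∈ G.neighborFinset i, w i + w j ≠ 0) :
    partialL G w i ≤ 0 := by
  by_contra! hpos
  refine hwu ⟨partialL G w i, Matrix.mem_spectrum_of_row_eq_single (i := i) ?_,
    by simpa using hpos⟩
  ext j
  rw [Matrix.map_apply, polyaJacobian_row_eq_single_of_eq_zero hwi hw, Pi.single_apply,
    Pi.single_apply]
  split_ifs <;> simp

lemma partialL_nonpos_of_mem_equilibria {c : ℝ} (hc : 0 < c) {w : Fin m → ℝ}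
    (hw : w ∈ equilibria G c) (hwu : ¬ Unstable G w) (i : Fin m) : partialL G w i ≤ 0 := by
  by_cases hwi : w i = 0
  · exact partialL_nonpos_of_not_unstable hwu hwi fun j hj =>
      (add_pos_of_mem_simplexDelta hw.1 hc ((G.mem_neighborFinset i j).1 hj)).ne'
  · have hF := congrFun hw.2 i
    rw [polyaF_apply_eq_mul_partialL, Pi.zero_apply] at hF
    exact ((mul_eq_zero.1 hF).resolve_left hwi).le

lemma edgeRatioSum_le_card_edges (hN : 0 < (#G.edgeFinset : ℝ)) {w v : Fin m → ℝ}
    (hw : ∀ i, partialL G w i ≤ 0) (hv0 : ∀ i, 0 ≤ v i) (hv1 : ∑ i, v i = 1) :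
    edgeRatioSum G v w ≤ #G.edgeFinset := by
  have hs : ∀ i, ∑ j ∈ G.neighborFinset i, 1 / (w i + w j) ≤ #G.edgeFinset := fun i => by
    have h := hw i
    rwa [partialL, neg_add_nonpos_iff, one_div_mul_eq_div, div_le_one hN] at h
  calc edgeRatioSum G v w = ∑ i, v i * ∑ j ∈ G.neighborFinset i, 1 / (w i + w j) :=
        edgeRatioSum_eq_sum_mul_sum v w
    _ ≤ ∑ i, v i * #G.edgeFinset :=
        sum_le_sum fun i _ => mul_le_mul_of_nonneg_left (hs i) (hv0 i)
    _ = #G.edgeFinset := by rw [← sum_mul, hv1, one_mul]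

/-- If `G` is finite, connected, not balanced-bipartite and `w ∈ Λ`
is a non-unstable equilibrium, then `f(v) = ∑_{{i,j} ∈ E} (w_i+w_j)/(v_i+v_j) ≥ N` for
every `v ∈ Δ`, with equality if and only if `v = w`. -/
theorem edgeRatioSum_ge_card_edges
    (m : ℕ) (G : SimpleGraph (Fin m)) [DecidableRel G.Adj]
    (hconn : G.Connected) (hnbb : ¬ BalancedBipartite G)
    (c : ℝ) (hc0 : 0 < c) (hc1 : c < 1 / (G.edgeFinset.card : ℝ))
    (w : Fin m → ℝ) (hw : w ∈ equilibria G c) (hwu : ¬ Unstable G w) :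
    ∀ v ∈ simplexDelta G c,
      (G.edgeFinset.card : ℝ) ≤ edgeRatioSum G w v ∧
      (edgeRatioSum G w v = (G.edgeFinset.card : ℝ) ↔ v = w) := by
  intro v hv
  have hN : 0 < (#G.edgeFinset : ℝ) := one_div_pos.1 (hc0.trans hc1)
  have hwpos : ∀ i j, G.Adj i j → 0 < w i + w j := fun _ _ =>
    add_pos_of_mem_simplexDelta hw.1 hc0
  have hvpos : ∀ i j, G.Adj i j → 0 < v i + v j := fun _ _ =>
    add_pos_of_mem_simplexDelta hv hc0
  have hg : edgeRatioSum G v w ≤ #G.edgeFinset := edgeRatioSum_le_card_edges hN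
    (partialL_nonpos_of_mem_equilibria hc0 hw hwu) hv.1 hv.2.1
  have hfg := two_mul_card_edges_le_edgeRatioSum_add hwpos hvpos
  refine ⟨by linarith, fun hf => ?_, fun hvw => hvw ▸ edgeRatioSum_self hvpos⟩
  have hedge := add_eq_add_of_edgeRatioSum_add_eq hwpos hvpos (by linarith)
  refine sub_eq_zero.1 (eq_zero_of_forall_adj_add_eq_zero hconn hnbb (fun i j hij => ?_) ?_)
  · simp only [Pi.sub_apply]
    linarith [hedge hij]
  · simp only [Pi.sub_apply, sum_sub_distrib, hv.2.1, hw.1.2.1, sub_self]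

end GPU
end
end
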